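/- arXiv:1404.6781 — 2 statements merged into one kernel-verified Lean document; each statement's English description precedes it below -/
import Mathlib

section
/- A set E of fragments of a logic program P is a stable fragment set of P if and only if the union of all fragments in E is a generating set of P and E equals the set of all fragments contained in that union. -/
/-- A literal over atoms `A`: `(true, a)` is the atom `a`, `(false, a)` is `¬ a`. -/
abbrev Lit (A : Type) := Bool × A

/-- A rule with head, positive body and negative body. -/
structure Rule (A : Type) where
  head : Lit A
  pos : Set (Lit A)
  neg : Set (Lit A)

variable {A : Type}

/-- Heads of a set of rules. -/
def headSet (R : Set (Rule A)) : Set (Lit A) := Rule.head '' R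

/-- `R ⊆ P` positively satisfies `P`. -/
def PosSat (P R : Set (Rule A)) : Prop :=
  R ⊆ P ∧ ∀ r ∈ P, r.pos ⊆ headSet R → r ∈ R

/-- The minimal set of rules positively satisfying `P`. -/
def MP (P : Set (Rule A)) : Set (Rule A) := ⋂₀ {R | PosSat P R}

/-- A set of rules defeats a rule. -/
def defeatsRule (R : Set (Rule A)) (r : Rule A) : Prop :=
  (headSet R ∩ r.neg).Nonempty

/-- A set of rules defeats a set of rules. -/
def defeatsSet (R₁ R₂ : Set (Rule A)) : Prop := ∃ r ∈ R₂, defeatsRule R₁ r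

/-- The reduct `P^R` removes each rule defeated by `R`. -/
def reduct (P R : Set (Rule A)) : Set (Rule A) := {r ∈ P | ¬ defeatsRule R r}

/-- `R ⊆ P` is a generating set of `P` iff `R = MP (P^R)`. -/
def GenSet (P R : Set (Rule A)) : Prop := R ⊆ P ∧ R = MP (reduct P R)

/-- A set of literals is consistent iff it contains no complementary pair. -/
def Consistent (S : Set (Lit A)) : Prop :=
  ∀ a : A, ¬ (((true, a) ∈ S) ∧ ((false, a) ∈ S))

/-- Answer sets via generating sets. -/
def AnswerSet (P : Set (Rule A)) (S : Set (Lit A)) : Prop :=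
  Consistent S ∧ ∃ R, GenSet P R ∧ headSet R = S

/-- `Γ_S(P)`: rules whose positive body is in `S` and negative body disjoint from `S`. -/
def Gamma (S : Set (Lit A)) (P : Set (Rule A)) : Set (Rule A) :=
  {r ∈ P | r.pos ⊆ S ∧ r.neg ∩ S = ∅}

/-- Fragments of a program. -/
def Frag (P : Set (Rule A)) : Set (Set (Rule A)) := {R | R ⊆ P ∧ MP R = R}

/-- Fragment reduct: remove fragments defeated by a member of `E`. -/
def fragReduct (P : Set (Rule A)) (E : Set (Set (Rule A))) : Set (Set (Rule A)) :=
  {X ∈ Frag P | ¬ ∃ Y ∈ E, defeatsSet Y X}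

/-- Stable fragment sets. -/
def StableFragSet (P : Set (Rule A)) (E : Set (Set (Rule A))) : Prop :=
  E ⊆ Frag P ∧ fragReduct P E = E

/-- Mutually defeating (conflicting) sets of rules. -/
def Conflicting (X Y : Set (Rule A)) : Prop := defeatsSet X Y ∧ defeatsSet Y X

/-- `X` overrides `Y` w.r.t. the preference relation `lt`. -/
def Overrides (lt : Rule A → Rule A → Prop) (X Y : Set (Rule A)) : Prop :=
  Conflicting X Y ∧
    ∀ r₁ ∈ X, defeatsRule Y r₁ → ∃ r₂ ∈ Y, defeatsRule X r₂ ∧ lt r₂ r₁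

/-- Preferred fragment reduct (semantics G). -/
def prefFragReduct (lt : Rule A → Rule A → Prop) (P : Set (Rule A))
    (E : Set (Set (Rule A))) : Set (Set (Rule A)) :=
  {X ∈ Frag P | ¬ ∃ Y ∈ E, defeatsSet Y X ∧ ¬ Overrides lt X Y}

/-- Preferred stable fragment sets (semantics G). -/
def PrefStableFragSet (lt : Rule A → Rule A → Prop) (P : Set (Rule A))
    (E : Set (Set (Rule A))) : Prop :=
  E ⊆ Frag P ∧ prefFragReduct lt P E = E

/-- Preferred answer sets under the fragment-based semantics G. -/
def GPrefAnswerSet (lt : Rule A → Rule A → Prop) (P : Set (Rule A))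
    (S : Set (Lit A)) : Prop :=
  Consistent S ∧ ∃ E, PrefStableFragSet lt P E ∧ headSet (⋃₀ E) = S

/-- `T(r,R)` for semantics GNO. -/
def Trules (lt : Rule A → Rule A → Prop) (r : Rule A) (R : Set (Rule A)) :
    Set (Rule A) :=
  MP {p ∈ R | ¬ lt p r}

/-- GNO reduct: remove rules `r` with `body⁻(r) ∩ head(T(r,R)) ≠ ∅`. -/
def gnoReduct (lt : Rule A → Rule A → Prop) (P R : Set (Rule A)) : Set (Rule A) :=
  {r ∈ P | ¬ (r.neg ∩ headSet (Trules lt r R)).Nonempty}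

/-- GNO-preferred generating sets. -/
def GNOPrefGen (lt : Rule A → Rule A → Prop) (P R : Set (Rule A)) : Prop :=
  GenSet P R ∧ R = MP (gnoReduct lt P R)

/-- GNO-preferred answer sets. -/
def GNOPrefAnswerSet (lt : Rule A → Rule A → Prop) (P : Set (Rule A))
    (S : Set (Lit A)) : Prop :=
  Consistent S ∧ ∃ R, GNOPrefGen lt P R ∧ headSet R = S

/-- A rule defeats a rule. -/
def defeats (r₁ r₂ : Rule A) : Prop := r₁.head ∈ r₂.neg

/-- `r₁` directly overrides `r₂` w.r.t. `lt`. -/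
def DirOverrides (lt : Rule A → Rule A → Prop) (r₁ r₂ : Rule A) : Prop :=
  (defeats r₁ r₂ ∧ defeats r₂ r₁) ∧ lt r₂ r₁

/-- D-reduct for the direct-conflict semantics. -/
def dReduct (lt : Rule A → Rule A → Prop) (P R : Set (Rule A)) : Set (Rule A) :=
  {r₁ ∈ P | ¬ ∃ r₂ ∈ R, defeats r₂ r₁ ∧ ¬ DirOverrides lt r₁ r₂}

/-- D-preferred generating sets. -/
def DPrefGen (lt : Rule A → Rule A → Prop) (P R : Set (Rule A)) : Prop :=
  R = MP (dReduct lt P R)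

/-- D-preferred answer sets. -/
def DPrefAnswerSet (lt : Rule A → Rule A → Prop) (P : Set (Rule A))
    (S : Set (Lit A)) : Prop :=
  Consistent S ∧ ∃ R, DPrefGen lt P R ∧ headSet R = S

/-- Stratified programs. -/
def Stratified (P : Set (Rule A)) : Prop :=
  ∃ lam : Lit A → ℕ, ∀ r ∈ P,
    (∀ l ∈ r.pos, lam l ≤ lam r.head) ∧ (∀ l ∈ r.neg, lam l < lam r.head)

/-!
A rule set `X` is defeated by some `Y ∈ E` exactly when it is defeated by `⋃₀ E`, so the fragment
reduct `P^E` is the set of fragments of the ordinary reduct `Q = P^(⋃₀ E)`, i.e. the `MP`-closed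
subsets of `MP Q`. Their union is `MP Q` itself. Hence `P^E = E` says both that `⋃₀ E = MP Q`
(generating set) and that `E` consists of all `MP`-closed subsets of `⋃₀ E`, and conversely.
-/

lemma posSat_self (P : Set (Rule A)) : PosSat P P :=
  ⟨subset_rfl, fun _ hr _ => hr⟩

lemma MP_subset_of_posSat {P R : Set (Rule A)} (h : PosSat P R) : MP P ⊆ R :=
  Set.sInter_subset_of_mem h

lemma MP_subset (P : Set (Rule A)) : MP P ⊆ P :=
  MP_subset_of_posSat (posSat_self P)

lemma headSet_mono {R S : Set (Rule A)} (h : R ⊆ S) : headSet R ⊆ headSet S :=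
  Set.image_mono h

lemma posSat_MP (P : Set (Rule A)) : PosSat P (MP P) := by
  refine ⟨MP_subset P, fun r hr hpos R hR => ?_⟩
  exact hR.2 r hr (hpos.trans (headSet_mono (Set.sInter_subset_of_mem hR)))

lemma MP_mono {P Q : Set (Rule A)} (h : P ⊆ Q) : MP P ⊆ MP Q := by
  have : PosSat P (MP Q ∩ P) := by
    refine ⟨Set.inter_subset_right, fun r hr hpos => ⟨?_, hr⟩⟩
    exact (posSat_MP Q).2 r (h hr) (hpos.trans (headSet_mono Set.inter_subset_left))
  exact (MP_subset_of_posSat this).trans Set.inter_subset_left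

lemma MP_idem (P : Set (Rule A)) : MP (MP P) = MP P := by
  refine (MP_subset _).antisymm (MP_subset_of_posSat ⟨(MP_subset _).trans (MP_subset _), ?_⟩)
  intro r hr hpos
  have hr' : r ∈ MP P := (posSat_MP P).2 r hr (hpos.trans (headSet_mono (MP_subset _)))
  exact (posSat_MP (MP P)).2 r hr' hpos

lemma frag_eq_setOf_subset_MP (Q : Set (Rule A)) : Frag Q = {T | MP T = T ∧ T ⊆ MP Q} := by
  ext T
  constructor
  · rintro ⟨hTQ, hT⟩
    exact ⟨hT, hT ▸ MP_mono hTQ⟩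
  · rintro ⟨hT, hTQ⟩
    exact ⟨hTQ.trans (MP_subset Q), hT⟩

lemma sUnion_setOf_MP_eq_subset {S : Set (Rule A)} (hS : MP S = S) :
    ⋃₀ {T | MP T = T ∧ T ⊆ S} = S :=
  (Set.sUnion_subset fun _ hT => hT.2).antisymm (Set.subset_sUnion_of_mem ⟨hS, subset_rfl⟩)

lemma defeatsRule_sUnion {E : Set (Set (Rule A))} {r : Rule A} :
    defeatsRule (⋃₀ E) r ↔ ∃ Y ∈ E, defeatsRule Y r := by
  simp only [defeatsRule, headSet, Set.sUnion_eq_biUnion, Set.image_iUnion₂, Set.iUnion₂_inter,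
    Set.nonempty_iUnion, exists_prop]

lemma fragReduct_eq_frag_reduct (P : Set (Rule A)) (E : Set (Set (Rule A))) :
    fragReduct P E = Frag (reduct P (⋃₀ E)) := by
  ext X
  simp only [fragReduct, Frag, reduct, defeatsSet, Set.mem_ofPred_eq, Set.subset_def,
    defeatsRule_sUnion]
  grind

lemma stableFragSet_iff (P : Set (Rule A)) (E : Set (Set (Rule A))) :
    StableFragSet P E ↔ fragReduct P E = E :=
  ⟨And.right, fun h => ⟨h ▸ fun _ hX => hX.1, h⟩⟩

lemma genSet_iff (P R : Set (Rule A)) : GenSet P R ↔ R = MP (reduct P R) :=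
  ⟨And.right, fun h => ⟨h ▸ (MP_subset _).trans fun _ hr => hr.1, h⟩⟩

theorem stableFragSet_iff_genSet_general (P : Set (Rule A))
    (E : Set (Set (Rule A))) :
    StableFragSet P E ↔
      GenSet P (⋃₀ E) ∧ E = {T : Set (Rule A) | MP T = T ∧ T ⊆ ⋃₀ E} := by
  rw [stableFragSet_iff, genSet_iff, fragReduct_eq_frag_reduct, frag_eq_setOf_subset_MP]
  constructor
  · intro hE
    have hU : ⋃₀ E = MP (reduct P (⋃₀ E)) := by
      conv_lhs => rw [← hE]
      exact sUnion_setOf_MP_eq_subset (MP_idem _)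
    exact ⟨hU, hU ▸ hE.symm⟩
  · rintro ⟨hU, hE⟩
    rw [← hU, ← hE]

/-- `E ⊆ Frag P` is a stable fragment set of `P` iff `⋃₀ E` is a
generating set of `P` and `E` is exactly the set of fragments included in `⋃₀ E`. -/
theorem stableFragSet_iff_genSet (P : Set (Rule A)) (hP : P.Finite)
    (E : Set (Set (Rule A))) (hE : E ⊆ Frag P) :
    StableFragSet P E ↔
      GenSet P (⋃₀ E) ∧ E = {T : Set (Rule A) | MP T = T ∧ T ⊆ ⋃₀ E} :=
  stableFragSet_iff_genSet_general P E
end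

section
/- The fragment-based semantics G is anti-monotone in preferences: if <1 ⊆ <2 are two preference relations on the same program P, then every preferred answer set of (P, <2) is a preferred answer set of (P, <1). -/
variable {A : Type}

/-!
In a preferred stable fragment set `E` for `lt₂` no member defeats another: the two would
have to override each other, and following the preference down through the conflicting rules
would give an infinite `lt₂`-descending chain in the finite program. Without internal defeats
every member of `E` survives the reduct for any preference, while shrinking the preference
only shrinks the reduct; so `E` is also a preferred stable fragment set for `lt₁`.
-/

section Preference

variable {lt lt₁ lt₂ : Rule A → Rule A → Prop} {P X Y : Set (Rule A)}
  {E : Set (Set (Rule A))}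

lemma Overrides.mono (hsub : ∀ r₁ r₂, lt₁ r₁ r₂ → lt₂ r₁ r₂) (h : Overrides lt₁ X Y) :
    Overrides lt₂ X Y := by
  refine ⟨h.1, fun r₁ hr₁ hd => ?_⟩
  obtain ⟨r₂, hr₂, hd₂, hlt⟩ := h.2 r₁ hr₁ hd
  exact ⟨r₂, hr₂, hd₂, hsub _ _ hlt⟩

lemma Overrides.not_overrides (hwf : (X ∪ Y).WellFoundedOn lt) (hXY : Overrides lt X Y) :
    ¬ Overrides lt Y X := by
  intro hYX
  let inConflict (r : Rule A) : Prop := (r ∈ X ∧ defeatsRule Y r) ∨ (r ∈ Y ∧ defeatsRule X r)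
  have hfree : ∀ r ∈ X ∪ Y, ¬ inConflict r := by
    intro r hr
    refine hwf.induction (P := fun r => ¬ inConflict r) hr fun r _ ih => ?_
    rintro (⟨hrX, hd⟩ | ⟨hrY, hd⟩)
    · obtain ⟨r₂, hr₂Y, hd₂, hlt⟩ := hXY.2 r hrX hd
      exact ih r₂ (Or.inr hr₂Y) hlt (Or.inr ⟨hr₂Y, hd₂⟩)
    · obtain ⟨r₂, hr₂X, hd₂, hlt⟩ := hYX.2 r hrY hd
      exact ih r₂ (Or.inl hr₂X) hlt (Or.inl ⟨hr₂X, hd₂⟩)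
  obtain ⟨r, hrY, hd⟩ := hXY.1.1
  exact hfree r (Or.inr hrY) (Or.inr ⟨hrY, hd⟩)

lemma overrides_of_mem_prefFragReduct (hX : X ∈ prefFragReduct lt P E) (hY : Y ∈ E)
    (hd : defeatsSet Y X) : Overrides lt X Y := by
  by_contra hn
  exact hX.2 ⟨Y, hY, hd, hn⟩

lemma prefFragReduct_mono (hsub : ∀ r₁ r₂, lt₁ r₁ r₂ → lt₂ r₁ r₂) :
    prefFragReduct lt₁ P E ⊆ prefFragReduct lt₂ P E := by
  intro X hX
  refine ⟨hX.1, fun ⟨Y, hY, hd, hn⟩ => hn ?_⟩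
  exact (overrides_of_mem_prefFragReduct hX hY hd).mono hsub

lemma subset_prefFragReduct (hE : E ⊆ Frag P)
    (hfree : ∀ X ∈ E, ∀ Y ∈ E, ¬ defeatsSet Y X) : E ⊆ prefFragReduct lt P E :=
  fun X hX => ⟨hE hX, fun ⟨Y, hY, hd, _⟩ => hfree X hX Y hY hd⟩

lemma PrefStableFragSet.not_defeatsSet [IsStrictOrder (Rule A) lt] (hP : P.Finite)
    (hE : PrefStableFragSet lt P E) (hX : X ∈ E) (hY : Y ∈ E) : ¬ defeatsSet Y X := by
  intro hd
  have hXY := overrides_of_mem_prefFragReduct (hE.2.ge hX) hY hd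
  have hYX := overrides_of_mem_prefFragReduct (hE.2.ge hY) hX hXY.1.1
  have hfin : (X ∪ Y).Finite := hP.subset (Set.union_subset (hE.1 hX).1 (hE.1 hY).1)
  exact hXY.not_overrides hfin.wellFoundedOn hYX

end Preference

theorem gPref_antimono_general (P : Set (Rule A)) (hP : P.Finite)
    (lt₁ lt₂ : Rule A → Rule A → Prop)
    (htrans₂ : Transitive lt₂) (hasymm₂ : ∀ r₁ r₂, lt₂ r₁ r₂ → ¬ lt₂ r₂ r₁)
    (hsub : ∀ r₁ r₂, lt₁ r₁ r₂ → lt₂ r₁ r₂)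
    (S : Set (Lit A)) (h : GPrefAnswerSet lt₂ P S) :
    GPrefAnswerSet lt₁ P S := by
  obtain ⟨hcons, E, hE, hhead⟩ := h
  have : IsStrictOrder (Rule A) lt₂ :=
    { trans := htrans₂, irrefl := fun r hr => hasymm₂ r r hr hr }
  have hfree : ∀ X ∈ E, ∀ Y ∈ E, ¬ defeatsSet Y X := fun X hX Y hY =>
    hE.not_defeatsSet hP hX hY
  refine ⟨hcons, E, ⟨hE.1, ?_⟩, hhead⟩
  exact ((prefFragReduct_mono hsub).trans hE.2.le).antisymm (subset_prefFragReduct hE.1 hfree)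

/-- semantics G is anti-monotone in preferences. -/
theorem gPref_antimono (P : Set (Rule A)) (hP : P.Finite)
    (lt₁ lt₂ : Rule A → Rule A → Prop)
    (htrans₁ : Transitive lt₁) (hasymm₁ : ∀ r₁ r₂, lt₁ r₁ r₂ → ¬ lt₁ r₂ r₁)
    (htrans₂ : Transitive lt₂) (hasymm₂ : ∀ r₁ r₂, lt₂ r₁ r₂ → ¬ lt₂ r₂ r₁)
    (hsub : ∀ r₁ r₂, lt₁ r₁ r₂ → lt₂ r₁ r₂)
    (S : Set (Lit A)) (h : GPrefAnswerSet lt₂ P S) :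
    GPrefAnswerSet lt₁ P S :=
  gPref_antimono_general P hP lt₁ lt₂ htrans₂ hasymm₂ hsub S h
end
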